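/- Let f(x) = max(−1, min(1, x)) and K be even, nonnegative, supported in [−2,2], nonincreasing on [0,2], with ∫K ≥ 2. Define B = {u : [−r,r] → ℝ : u(x)=1 for x>1, u(x)=−1 for x<−1, u odd and nondecreasing} with r > 4. Then u ↦ f((K∗ũ)|_{[−r,r]}) maps B into B. -/

import Mathlib

/-!
Write `v = K ∗ ũ`. As `K` is even and `ũ` is odd, `v` is odd, and folding the integral at `0`
gives `v x = ∫_{y > 0} (K (x - y) - K (x + y)) ũ y`, whose weight is nonnegative for `x ≥ 0`
because `K` is nonincreasing in `|z|`. Since `ũ ≥ 0` on `(0, ∞)` and `ũ = 1` on `(1, r]`, for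
`1 < x ≤ r` this is at least `∫_{x-r}^{x-1} K`, the mass of `K` on an interval of length `r - 1`
around `0`. Subadditivity of `p ↦ ∫_0^p K` bounds that mass below by
`∫_0^{r-1} K = (∫ K) / 2 ≥ 1`. On `[-1, 1]` the kernel only sees `u` inside `[-r, r]`, where `u`
is nondecreasing, so `v` is nondecreasing there; saturation then lands in `B`.
-/

open MeasureTheory

/-- The saturation function `f(x) = max(−1, min(1, x))`. -/
noncomputable def sat (x : ℝ) : ℝ := max (-1) (min 1 x)

/-- Membership in the invariant set `B` (gap of width `2c`): `u = 1` on `(c, r]`, `u = −1` on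
`[−r, −c)`, `u` odd and nondecreasing on `[−r, r]`. -/
def memB (r c : ℝ) (u : ℝ → ℝ) : Prop :=
  (∀ x : ℝ, c < x → x ≤ r → u x = 1) ∧
  (∀ x : ℝ, x < -c → -r ≤ x → u x = -1) ∧
  (∀ x ∈ Set.Icc (-r) r, u (-x) = -u x) ∧
  MonotoneOn u (Set.Icc (-r) r)

open Set

lemma sat_le_one (x : ℝ) : sat x ≤ 1 := max_le (by norm_num) (min_le_left _ _)

lemma neg_one_le_sat (x : ℝ) : -1 ≤ sat x := le_max_left _ _

lemma sat_mono : Monotone sat := fun _ _ h => max_le_max le_rfl (min_le_min le_rfl h)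

lemma sat_of_one_le {x : ℝ} (h : 1 ≤ x) : sat x = 1 := by
  rw [sat, min_eq_left h, max_eq_right (by norm_num)]

lemma sat_of_le_neg_one {x : ℝ} (h : x ≤ -1) : sat x = -1 := by
  rw [sat, min_eq_right (by linarith), max_eq_left h]

lemma sat_neg (x : ℝ) : sat (-x) = -sat x := by
  simp only [sat, min_def, max_def]
  split_ifs <;> linarith

lemma memB_sat_comp {r c : ℝ} {v : ℝ → ℝ} (hodd : ∀ x, v (-x) = -v x)
    (hone : ∀ x, c < x → x ≤ r → 1 ≤ v x) (hmono : MonotoneOn v (Icc (-c) c)) :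
    memB r c (fun x => sat (v x)) := by
  have hneg : ∀ x, x < -c → -r ≤ x → v x ≤ -1 := fun x h₁ h₂ => by
    have := hone (-x) (by linarith) (by linarith)
    rw [hodd] at this
    linarith
  refine ⟨fun x h₁ h₂ => sat_of_one_le (hone x h₁ h₂),
    fun x h₁ h₂ => sat_of_le_neg_one (hneg x h₁ h₂),
    fun x _ => show sat (v (-x)) = -sat (v x) by rw [hodd, sat_neg], ?_⟩
  intro x₁ hx₁ x₂ hx₂ hx
  dsimp only
  by_cases h₂ : c < x₂
  · rw [sat_of_one_le (hone x₂ h₂ hx₂.2)]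
    exact sat_le_one _
  by_cases h₁ : x₁ < -c
  · rw [sat_of_le_neg_one (hneg x₁ h₁ hx₁.1)]
    exact neg_one_le_sat _
  rw [not_lt] at h₁ h₂
  exact sat_mono (hmono ⟨h₁, hx.trans h₂⟩ ⟨h₁.trans hx, h₂⟩ hx)

namespace memB

variable {r c : ℝ} {u : ℝ → ℝ}

lemma map_zero (hu : memB r c u) (hr : 0 ≤ r) : u 0 = 0 := by
  have h := hu.2.2.1 0 ⟨by linarith, hr⟩
  rw [neg_zero] at h
  linarith

lemma indicator_neg (hu : memB r c u) (y : ℝ) :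
    (Icc (-r) r).indicator u (-y) = -(Icc (-r) r).indicator u y := by
  by_cases hy : y ∈ Icc (-r) r
  · rw [indicator_of_mem (mem_Icc.mpr ⟨by linarith [hy.2], by linarith [hy.1]⟩),
      indicator_of_mem hy, hu.2.2.1 y hy]
  · have hy' : -y ∉ Icc (-r) r := fun h => hy ⟨by linarith [h.2], by linarith [h.1]⟩
    rw [indicator_of_notMem hy', indicator_of_notMem hy, neg_zero]

lemma indicator_nonneg (hu : memB r c u) {y : ℝ} (hy : 0 ≤ y) :
    0 ≤ (Icc (-r) r).indicator u y := by
  by_cases hyr : y ≤ r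
  · rw [indicator_of_mem (mem_Icc.mpr ⟨by linarith, hyr⟩), ← hu.map_zero (hy.trans hyr)]
    exact hu.2.2.2 ⟨by linarith, hy.trans hyr⟩ ⟨by linarith, hyr⟩ hy
  · rw [indicator_of_notMem fun h => hyr h.2]

lemma one_le_indicator (hu : memB r c u) (hc : 0 ≤ c) {y : ℝ} (hy : y ∈ Ioc c r) :
    1 ≤ (Icc (-r) r).indicator u y := by
  rw [indicator_of_mem (mem_Icc.mpr ⟨by linarith [hy.1, hy.2], hy.2⟩), hu.1 y hy.1 hy.2]

lemma abs_indicator_le_one (hu : memB r c u) (hcr : c < r) (y : ℝ) :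
    |(Icc (-r) r).indicator u y| ≤ 1 := by
  by_cases hy : y ∈ Icc (-r) r
  · have hr : -r ≤ r := hy.1.trans hy.2
    rw [indicator_of_mem hy, abs_le, ← hu.2.1 (-r) (by linarith) le_rfl, ← hu.1 r hcr le_rfl]
    exact ⟨hu.2.2.2 ⟨le_rfl, hr⟩ hy hy.1, hu.2.2.2 hy ⟨hr, le_rfl⟩ hy.2⟩
  · rw [indicator_of_notMem hy, abs_zero]
    exact zero_le_one

lemma indicator_monotoneOn (hu : memB r c u) : MonotoneOn ((Icc (-r) r).indicator u) (Icc (-r) r) :=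
  hu.2.2.2.congr fun _ hy => (indicator_of_mem hy u).symm

end memB

section Kernel

variable {K g : ℝ → ℝ}

lemma antitoneOn_Ici_of_support_subset {ρ : ℝ} (hKpos : ∀ z, 0 ≤ K z)
    (hKsupp : Function.support K ⊆ Icc (-ρ) ρ) (hKmono : AntitoneOn K (Icc 0 ρ)) :
    AntitoneOn K (Ici 0) := by
  intro s hs t ht hst
  by_cases htρ : t ≤ ρ
  · exact hKmono ⟨hs, hst.trans htρ⟩ ⟨ht, htρ⟩ hst
  · rw [Function.notMem_support.mp fun h => htρ (hKsupp h).2]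
    exact hKpos s

lemma intervalIntegral_neg_eq_add_of_even (hKeven : ∀ z, K (-z) = K z) (hKi : Integrable K)
    (a b : ℝ) : ∫ t in -a..b, K t = (∫ t in 0..a, K t) + ∫ t in 0..b, K t := by
  have hflip : ∫ t in -a..0, K t = ∫ t in 0..a, K t := by
    simpa [hKeven] using (intervalIntegral.integral_comp_neg (a := 0) (b := a) K).symm
  rw [← intervalIntegral.integral_add_adjacent_intervals (b := 0) hKi.intervalIntegrable
    hKi.intervalIntegrable, hflip]

lemma intervalIntegral_zero_add_le_of_antitoneOn (hKanti : AntitoneOn K (Ici 0))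
    (hKi : Integrable K) {p q : ℝ} (hp : 0 ≤ p) (hq : 0 ≤ q) :
    ∫ t in 0..p + q, K t ≤ (∫ t in 0..p, K t) + ∫ t in 0..q, K t := by
  have hshift : ∫ t in p..p + q, K t = ∫ t in 0..q, K (t + p) := by
    rw [intervalIntegral.integral_comp_add_right, zero_add, add_comm q]
  rw [← intervalIntegral.integral_add_adjacent_intervals (b := p) hKi.intervalIntegrable
    hKi.intervalIntegrable, hshift]
  gcongr
  refine intervalIntegral.integral_mono_on hq (hKi.comp_add_right p).intervalIntegrable
    hKi.intervalIntegrable fun t ht => hKanti ht.1 ?_ (by linarith)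
  exact add_nonneg ht.1 hp

lemma integral_comp_neg_mul_of_odd (hKeven : ∀ z, K (-z) = K z) (hg : ∀ y, g (-y) = -g y)
    (x : ℝ) : ∫ y, K (-x - y) * g y = -∫ y, K (x - y) * g y := by
  rw [← integral_neg_eq_self, ← integral_neg]
  congr 1 with y
  rw [hg, show -x - -y = -(x - y) by ring, hKeven]
  ring

lemma integrable_comp_add_mul_of_even (hKeven : ∀ z, K (-z) = K z)
    (hint : ∀ x, Integrable fun y => K (x - y) * g y) (x : ℝ) :
    Integrable fun y => K (x + y) * g y :=
  (hint (-x)).congr <| Filter.Eventually.of_forall fun y => by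
    simp only [← hKeven (x + y), neg_add']

lemma integral_mul_eq_setIntegral_Ioi_of_odd (hKeven : ∀ z, K (-z) = K z)
    (hg : ∀ y, g (-y) = -g y) (hint : ∀ x, Integrable fun y => K (x - y) * g y) (x : ℝ) :
    ∫ y, K (x - y) * g y = ∫ y in Ioi 0, (K (x - y) - K (x + y)) * g y := by
  have hreflect : ∫ y in Iic 0, K (x - y) * g y = -∫ y in Ioi 0, K (x + y) * g y := by
    rw [← neg_zero, ← integral_comp_neg_Ioi, neg_zero, ← integral_neg]
    refine integral_congr_ae (Filter.Eventually.of_forall fun y => ?_)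
    simp only [hg, sub_neg_eq_add]
    ring
  rw [← integral_add_compl measurableSet_Ioi (hint x), compl_Ioi, hreflect,
    ← sub_eq_add_neg, ← integral_sub (hint x).integrableOn
      (integrable_comp_add_mul_of_even hKeven hint x).integrableOn]
  refine integral_congr_ae (Filter.Eventually.of_forall fun y => ?_)
  dsimp only
  ring

lemma integral_mul_monotoneOn {ρ a b : ℝ} (hKpos : ∀ z, 0 ≤ K z)
    (hKsupp : Function.support K ⊆ Icc (-ρ) ρ) (hg : MonotoneOn g (Icc a b))
    (hint : ∀ x, Integrable fun y => K (x - y) * g y) :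
    MonotoneOn (fun x => ∫ y, K (x - y) * g y) (Icc (a + ρ) (b - ρ)) := by
  intro x₁ hx₁ x₂ hx₂ hx
  have hshift : ∀ x, ∫ y, K (x - y) * g y = ∫ t, K t * g (x - t) := fun x => by
    simpa using (integral_sub_left_eq_self (fun y => K (x - y) * g y) volume x).symm
  have hint' : ∀ x, Integrable fun t => K t * g (x - t) := fun x => by
    simpa using (hint x).comp_sub_left x
  simp only [hshift]
  refine integral_mono (hint' x₁) (hint' x₂) fun t => ?_
  by_cases ht : K t = 0
  · simp [ht]
  obtain ⟨ht₁, ht₂⟩ := hKsupp ht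
  have hx₁t : x₁ - t ∈ Icc a b := ⟨by linarith [hx₁.1], by linarith [hx₁.2]⟩
  have hx₂t : x₂ - t ∈ Icc a b := ⟨by linarith [hx₂.1], by linarith [hx₂.2]⟩
  exact mul_le_mul_of_nonneg_left (hg hx₁t hx₂t (by linarith)) (hKpos t)

lemma apply_eq_apply_abs_of_even (hKeven : ∀ z, K (-z) = K z) (z : ℝ) : K z = K |z| := by
  rcases abs_choice z with h | h <;> rw [h]
  exact (hKeven z).symm

lemma setIntegral_Ioc_le_integral_mul_of_odd {a b x : ℝ} (hKeven : ∀ z, K (-z) = K z)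
    (hKanti : AntitoneOn K (Ici 0)) (hKi : Integrable K) (hg : ∀ y, g (-y) = -g y)
    (hg_nonneg : ∀ y, 0 < y → 0 ≤ g y) (hg_one : ∀ y ∈ Ioc a b, 1 ≤ g y)
    (hint : ∀ x, Integrable fun y => K (x - y) * g y) (ha : 0 ≤ a) (hx : 0 ≤ x) :
    ∫ y in Ioc a b, (K (x - y) - K (x + y)) ≤ ∫ y, K (x - y) * g y := by
  have hD : ∀ y, 0 < y → 0 ≤ K (x - y) - K (x + y) := fun y hy => by
    rw [apply_eq_apply_abs_of_even hKeven (x - y), sub_nonneg]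
    exact hKanti (mem_Ici.mpr (abs_nonneg _)) (mem_Ici.mpr (by linarith))
      (abs_le.mpr ⟨by linarith, by linarith⟩)
  have hDi : Integrable fun y => K (x - y) - K (x + y) :=
    (hKi.comp_sub_left x).sub (hKi.comp_add_left x)
  have hDg : Integrable fun y => (K (x - y) - K (x + y)) * g y := by
    simp only [sub_mul]
    exact (hint x).sub (integrable_comp_add_mul_of_even hKeven hint x)
  calc ∫ y in Ioc a b, (K (x - y) - K (x + y))
      ≤ ∫ y in Ioc a b, (K (x - y) - K (x + y)) * g y :=
        setIntegral_mono_on hDi.integrableOn hDg.integrableOn measurableSet_Ioc fun y hy =>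
          le_mul_of_one_le_right (hD y (ha.trans_lt hy.1)) (hg_one y hy)
    _ ≤ ∫ y in Ioi 0, (K (x - y) - K (x + y)) * g y := by
        refine setIntegral_mono_set hDg.integrableOn ?_ (Ioc_subset_Ioi_self.trans
          (Ioi_subset_Ioi ha)).eventuallyLE
        exact (ae_restrict_iff' measurableSet_Ioi).mpr (Filter.Eventually.of_forall fun y hy =>
          mul_nonneg (hD y hy) (hg_nonneg y hy))
    _ = ∫ y, K (x - y) * g y := (integral_mul_eq_setIntegral_Ioi_of_odd hKeven hg hint x).symm

lemma integral_div_two_le_setIntegral_Ioc {ρ c r x : ℝ} (hKeven : ∀ z, K (-z) = K z)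
    (hKanti : AntitoneOn K (Ici 0)) (hKi : Integrable K)
    (hKsupp : Function.support K ⊆ Icc (-ρ) ρ) (hρc : ρ ≤ 2 * c) (hρr : ρ < r - c)
    (hcx : c < x) (hxr : x ≤ r) :
    (∫ z, K z) / 2 ≤ ∫ y in Ioc c r, (K (x - y) - K (x + y)) := by
  have htotal : ∫ z, K z = 2 * ∫ t in 0..r - c, K t := by
    rw [← intervalIntegral.integral_eq_integral_of_support_subset (a := -(r - c)) (b := r - c)
      (hKsupp.trans fun z hz => ⟨by linarith [hz.1], by linarith [hz.2]⟩),
      intervalIntegral_neg_eq_add_of_even hKeven hKi]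
    ring
  have hvanish : ∀ y ∈ Ioc c r, K (x + y) = 0 := fun y hy =>
    Function.notMem_support.mp fun h => by linarith [(hKsupp h).2, hy.1]
  calc (∫ z, K z) / 2 = ∫ t in 0..(r - x) + (x - c), K t := by
        rw [htotal, show r - x + (x - c) = r - c by ring]; ring
    _ ≤ (∫ t in 0..r - x, K t) + ∫ t in 0..x - c, K t :=
        intervalIntegral_zero_add_le_of_antitoneOn hKanti hKi (by linarith) (by linarith)
    _ = ∫ t in x - r..x - c, K t := by
        rw [← intervalIntegral_neg_eq_add_of_even hKeven hKi, neg_sub]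
    _ = ∫ y in Ioc c r, K (x - y) := by
        rw [← intervalIntegral.integral_comp_sub_left,
          intervalIntegral.integral_of_le (by linarith)]
    _ = ∫ y in Ioc c r, (K (x - y) - K (x + y)) :=
        setIntegral_congr_fun measurableSet_Ioc fun y hy => by simp [hvanish y hy]

end Kernel

/-- Let `f` be the saturation function and `K` even, nonnegative, supported in
`[−2,2]`, nonincreasing on `[0,2]`, with `∫K ≥ 2`.  With
`B = {u : [−r,r] → ℝ : u = 1 for x > 1, u = −1 for x < −1, u odd and nondecreasing}` (`r > 4`),
the map `u ↦ f((K ∗ ũ)|_{[−r,r]})` maps `B` into `B`. -/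
theorem invariant_set_positive_kernel_gap_one
    (r : ℝ) (hr : 4 < r)
    (K : ℝ → ℝ) (hKi : Integrable K volume)
    (hKeven : ∀ z, K (-z) = K z) (hKpos : ∀ z, 0 ≤ K z)
    (hKsupp : Function.support K ⊆ Set.Icc (-2) 2)
    (hKmono : AntitoneOn K (Set.Icc 0 2))
    (hKmass : 2 ≤ ∫ z, K z)
    (u : ℝ → ℝ) (hum : Measurable u) (hu : memB r 1 u) :
    memB r 1 (fun x => sat (∫ y, K (x - y) * Set.indicator (Set.Icc (-r) r) u y)) := by
  have hKanti : AntitoneOn K (Ici 0) := antitoneOn_Ici_of_support_subset hKpos hKsupp hKmono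
  have hint : ∀ x, Integrable fun y => K (x - y) * (Icc (-r) r).indicator u y := fun x =>
    (hKi.comp_sub_left x).mul_bdd (hum.indicator measurableSet_Icc).aestronglyMeasurable
      (Filter.Eventually.of_forall (hu.abs_indicator_le_one (by linarith)))
  refine memB_sat_comp (integral_comp_neg_mul_of_odd hKeven hu.indicator_neg)
    (fun x hx hxr => ?_)
    ((integral_mul_monotoneOn hKpos hKsupp hu.indicator_monotoneOn hint).mono
      (Icc_subset_Icc (by linarith) (by linarith)))
  calc 1 ≤ (∫ z, K z) / 2 := by linarith
    _ ≤ ∫ y in Ioc 1 r, (K (x - y) - K (x + y)) :=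
        integral_div_two_le_setIntegral_Ioc hKeven hKanti hKi hKsupp (by norm_num) (by linarith)
          hx hxr
    _ ≤ _ := setIntegral_Ioc_le_integral_mul_of_odd hKeven hKanti hKi hu.indicator_neg
        (fun y hy => hu.indicator_nonneg hy.le) (fun y hy => hu.one_le_indicator zero_le_one hy)
        hint zero_le_one (by linarith)
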